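/- Let p be an odd prime with p ≡ 3 (mod 4), q = p^m with m odd and 3 ∤ m. With S(α,β,γ) = Σ_{x∈F_q} ζ_p^{Tr(αx² + βx^{p+1} + γx^{p²+1})}, one has Σ_{α,β,γ ∈ F_q} S(α,β,γ)³ = ((p+1)(p^m − 1) + 1)·p^{3m}. -/

import Mathlib

/-!
Expanding the cube and summing over `α, β, γ` by orthogonality of the additive character
turns the left side into `q³ N`, where `N` counts the `(x, y, z) ∈ F³` on which
`X² + Y² + Z²`, `X^(p+1) + Y^(p+1) + Z^(p+1)` and `X^(p²+1) + Y^(p²+1) + Z^(p²+1)` all vanish.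
As `q ≡ 3 (mod 4)`, `-1` is not a square in `F`, so `x = 0` forces `y = z = 0`. For `x ≠ 0`
write `y = u x`, `z = v x`; then `u² + v² = -1 = u^(p+1) + v^(p+1)`, and the Lagrange identity
`(u v^p - v u^p)² = (u² + v²)((u^p)² + (v^p)²) - (u^(p+1) + v^(p+1))²` shows `u v^p = v u^p`,
whence `u, v ∈ 𝔽_p`. A Jacobi sum computation shows that the conic `u² + v² = -1` has `p + 1`
points over `𝔽_p`, so `N = 1 + (q - 1)(p + 1)`.
-/

attribute [local instance] ZMod.algebra

open Finset Polynomial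

section SumOfTwoSquares

variable {K : Type*} [Field K] [Fintype K] [DecidableEq K]

lemma sum_sq_eq_sum_card_sqrts_smul {M : Type*} [AddCommMonoid M] (f : K → M) :
    ∑ u : K, f (u ^ 2) = ∑ a : K, #{u : K | u ^ 2 = a} • f a := by
  rw [← Finset.sum_fiberwise univ (fun u : K => u ^ 2)]
  refine sum_congr rfl fun a _ => ?_
  rw [← sum_const]
  exact sum_congr rfl fun u hu => by rw [(mem_filter.mp hu).2]

lemma sum_quadraticChar_mul_quadraticChar_sub (hK : ringChar K ≠ 2) {c : K} (hc : c ≠ 0) :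
    ∑ a : K, quadraticChar K a * quadraticChar K (c - a) = -quadraticChar K (-1) := by
  have hc2 : quadraticChar K c * quadraticChar K c = 1 := by
    rw [← map_mul, ← sq, quadraticChar_sq_one' hc]
  calc ∑ a : K, quadraticChar K a * quadraticChar K (c - a)
      = ∑ t : K, quadraticChar K (c * t) * quadraticChar K (c - c * t) :=
        (Fintype.sum_equiv (Equiv.mulLeft₀ c hc) _ _ fun _ => rfl).symm
    _ = jacobiSum (quadraticChar K) (quadraticChar K) := by
        refine sum_congr rfl fun t _ => ?_
        rw [show c - c * t = c * (1 - t) by ring, map_mul, map_mul]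
        linear_combination (quadraticChar K t * quadraticChar K (1 - t)) * hc2
    _ = -quadraticChar K (-1) := by
        simpa only [(quadraticChar_isQuadratic K).inv] using
          jacobiSum_nontrivial_inv (quadraticChar_ne_one hK)

lemma card_sq_add_sq_eq (hK : ringChar K ≠ 2) {c : K} (hc : c ≠ 0) :
    (#{w : K × K | w.1 ^ 2 + w.2 ^ 2 = c} : ℤ) = Fintype.card K - quadraticChar K (-1) := by
  have hsqrts : ∀ a : K, (#{u : K | u ^ 2 = a} : ℤ) = quadraticChar K a + 1 := fun a => by
    rw [← quadraticChar_card_sqrts hK a]; congr 2; ext; simp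
  calc (#{w : K × K | w.1 ^ 2 + w.2 ^ 2 = c} : ℤ)
      = ∑ u : K, (#{v : K | v ^ 2 = c - u ^ 2} : ℤ) := by
        rw [card_filter, Fintype.sum_prod_type]; push_cast
        refine sum_congr rfl fun u _ => ?_
        rw [card_filter]; push_cast
        exact sum_congr rfl fun v _ => by simp only [eq_sub_iff_add_eq']
    _ = ∑ u : K, (quadraticChar K (c - u ^ 2) + 1) := by simp only [hsqrts]
    _ = ∑ a : K, #{u : K | u ^ 2 = a} • (quadraticChar K (c - a) + 1) :=
        sum_sq_eq_sum_card_sqrts_smul fun a => quadraticChar K (c - a) + 1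
    _ = ∑ a : K, (quadraticChar K a + 1) * (quadraticChar K (c - a) + 1) := by
        simp only [nsmul_eq_mul, hsqrts]
    _ = ∑ a : K, quadraticChar K a * quadraticChar K (c - a) + ∑ a : K, quadraticChar K a
          + ∑ a : K, quadraticChar K (c - a) + ∑ _a : K, 1 := by
        simp only [← sum_add_distrib]
        exact sum_congr rfl fun a _ => by ring
    _ = Fintype.card K - quadraticChar K (-1) := by
        have hsub : ∑ a : K, quadraticChar K (c - a) = ∑ a : K, quadraticChar K a :=
          Fintype.sum_equiv (Equiv.subLeft c) _ _ fun _ => rfl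
        rw [sum_quadraticChar_mul_quadraticChar_sub hK hc, hsub, quadraticChar_sum_zero hK,
          sum_const, card_univ, nsmul_one]
        ring

lemma card_sq_add_sq_eq_of_not_isSquare_neg_one (hK : ¬IsSquare (-1 : K)) {c : K} (hc : c ≠ 0) :
    #{w : K × K | w.1 ^ 2 + w.2 ^ 2 = c} = Fintype.card K + 1 := by
  have hchar : ringChar K ≠ 2 := fun h => hK (FiniteField.isSquare_of_char_two h _)
  have h := card_sq_add_sq_eq hchar hc
  rw [quadraticChar_neg_one_iff_not_isSquare.mpr hK] at h
  omega

lemma eq_zero_of_sq_add_sq_eq_zero {K : Type*} [Field K] (hK : ¬IsSquare (-1 : K)) {y z : K}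
    (h : y ^ 2 + z ^ 2 = 0) : y = 0 ∧ z = 0 := by
  by_cases hz : z = 0
  · subst hz
    exact ⟨pow_eq_zero_iff two_ne_zero |>.mp (by simpa using h), rfl⟩
  · exact absurd ⟨y / z, by field_simp; linear_combination -h⟩ hK

end SumOfTwoSquares

section Frobenius

variable {p : ℕ} [Fact p.Prime] {F : Type*} [Field F] [CharP F p]

lemma pow_char_eq_self_of_sq_add_sq {u v c : F} (hc : c ≠ 0) (hcp : c ^ p = c)
    (h₁ : u ^ 2 + v ^ 2 = c) (h₂ : u * u ^ p + v * v ^ p = c) : u ^ p = u ∧ v ^ p = v := by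
  have hfrob : (u ^ p) ^ 2 + (v ^ p) ^ 2 = c := by
    rw [pow_right_comm u, pow_right_comm v, ← add_pow_char, h₁, hcp]
  have hcross : u * v ^ p - v * u ^ p = 0 := by
    have lagrange : (u * v ^ p - v * u ^ p) ^ 2
        = (u ^ 2 + v ^ 2) * ((u ^ p) ^ 2 + (v ^ p) ^ 2) - (u * u ^ p + v * v ^ p) ^ 2 := by ring
    rw [h₁, hfrob, h₂, ← sq, sub_self] at lagrange
    exact pow_eq_zero_iff two_ne_zero |>.mp lagrange
  refine ⟨mul_right_cancel₀ hc ?_, mul_right_cancel₀ hc ?_⟩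
  · linear_combination (-u ^ p) * h₁ + u * h₂ - v * hcross
  · linear_combination (-v ^ p) * h₁ + v * h₂ + u * hcross

lemma exists_algebraMap_eq_of_pow_char_eq_self {u : F} (hu : u ^ p = u) :
    ∃ a : ZMod p, algebraMap (ZMod p) F a = u := by
  have hroots : (X ^ p - X : (ZMod p)[X]).roots.map (algebraMap (ZMod p) F)
      = (X ^ p - X : F[X]).roots := by
    have h := FiniteField.roots_X_pow_card_sub_X (ZMod p)
    rw [ZMod.card] at h
    convert roots_map_of_injective_of_card_eq_natDegree (algebraMap (ZMod p) F).injective _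
    · simp
    · rw [h, FiniteField.X_pow_card_sub_X_natDegree_eq _ (Fact.out : p.Prime).one_lt]
      simp
  have hu' : u ∈ (X ^ p - X : F[X]).roots := by
    rw [mem_roots (FiniteField.X_pow_card_sub_X_ne_zero F (Fact.out : p.Prime).one_lt)]
    simp [hu]
  rw [← hroots] at hu'
  obtain ⟨a, -, ha⟩ := Multiset.mem_map.mp hu'
  exact ⟨a, ha⟩

lemma algebraMap_zmod_pow_char_pow (a : ZMod p) (k : ℕ) :
    algebraMap (ZMod p) F a ^ p ^ k = algebraMap (ZMod p) F a := by
  rw [← map_pow, ZMod.pow_card_pow]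

end Frobenius

section PowerSums

variable {F : Type*} [Field F] [Fintype F] [DecidableEq F]

lemma card_powerSums_fiber_zero (p : ℕ) (hF : ¬IsSquare (-1 : F)) :
    #{w : F × F | (0 : F) ^ 2 + w.1 ^ 2 + w.2 ^ 2 = 0 ∧
      (0 : F) ^ (p + 1) + w.1 ^ (p + 1) + w.2 ^ (p + 1) = 0 ∧
      (0 : F) ^ (p ^ 2 + 1) + w.1 ^ (p ^ 2 + 1) + w.2 ^ (p ^ 2 + 1) = 0} = 1 := by
  rw [card_eq_one]
  refine ⟨(0, 0), ?_⟩
  ext ⟨y, z⟩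
  simp only [mem_filter, mem_univ, true_and, mem_singleton, Prod.mk.injEq]
  constructor
  · rintro ⟨h, -, -⟩
    exact eq_zero_of_sq_add_sq_eq_zero hF (by simpa using h)
  · rintro ⟨rfl, rfl⟩
    simp

variable {p : ℕ} [Fact p.Prime] [CharP F p]

lemma card_powerSums_fiber_of_ne_zero (hF : ¬IsSquare (-1 : F)) {x : F} (hx : x ≠ 0) :
    #{w : F × F | x ^ 2 + w.1 ^ 2 + w.2 ^ 2 = 0 ∧
      x ^ (p + 1) + w.1 ^ (p + 1) + w.2 ^ (p + 1) = 0 ∧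
      x ^ (p ^ 2 + 1) + w.1 ^ (p ^ 2 + 1) + w.2 ^ (p ^ 2 + 1) = 0} = p + 1 := by
  set ι := algebraMap (ZMod p) F
  have hZ : ¬IsSquare (-1 : ZMod p) := fun ⟨r, hr⟩ =>
    hF ⟨ι r, by rw [← map_mul, ← hr, map_neg, map_one]⟩
  have hcircle : #{ab : ZMod p × ZMod p | ab.1 ^ 2 + ab.2 ^ 2 = -1} = p + 1 := by
    rw [card_sq_add_sq_eq_of_not_isSquare_neg_one hZ (neg_ne_zero.mpr one_ne_zero), ZMod.card]
  have hinj : Function.Injective fun ab : ZMod p × ZMod p => (ι ab.1 * x, ι ab.2 * x) := by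
    intro ab cd h
    simp only [Prod.mk.injEq, mul_left_inj' hx] at h
    exact Prod.ext (ι.injective h.1) (ι.injective h.2)
  have hscaled {n : ℕ} {u v : F} : x ^ (n + 1) + (u * x) ^ (n + 1) + (v * x) ^ (n + 1)
      = x ^ (n + 1) * (1 + u * u ^ n + v * v ^ n) := by ring
  suffices hset : #{w : F × F | x ^ 2 + w.1 ^ 2 + w.2 ^ 2 = 0 ∧
      x ^ (p + 1) + w.1 ^ (p + 1) + w.2 ^ (p + 1) = 0 ∧
      x ^ (p ^ 2 + 1) + w.1 ^ (p ^ 2 + 1) + w.2 ^ (p ^ 2 + 1) = 0}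
      = #(({ab : ZMod p × ZMod p | ab.1 ^ 2 + ab.2 ^ 2 = -1} : Finset _).image
        fun ab => (ι ab.1 * x, ι ab.2 * x)) by
    rw [hset, card_image_of_injective _ hinj, hcircle]
  congr 1
  ext ⟨y, z⟩
  simp only [mem_filter, mem_univ, true_and, mem_image, Prod.exists, Prod.mk.injEq]
  constructor
  · rintro ⟨e₁, e₂, -⟩
    obtain ⟨u, rfl⟩ : ∃ u, y = u * x := ⟨y / x, (div_mul_cancel₀ y hx).symm⟩
    obtain ⟨v, rfl⟩ : ∃ v, z = v * x := ⟨z / x, (div_mul_cancel₀ z hx).symm⟩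
    have h₁ : u ^ 2 + v ^ 2 = -1 := by
      have h : x ^ 2 * (u ^ 2 + v ^ 2 + 1) = 0 := by linear_combination e₁
      linear_combination (mul_eq_zero.mp h).resolve_left (pow_ne_zero 2 hx)
    have h₂ : u * u ^ p + v * v ^ p = -1 := by
      rw [hscaled] at e₂
      linear_combination (mul_eq_zero.mp e₂).resolve_left (pow_ne_zero _ hx)
    obtain ⟨hu, hv⟩ := pow_char_eq_self_of_sq_add_sq (neg_ne_zero.mpr one_ne_zero)
      (neg_one_pow_char F p) h₁ h₂
    obtain ⟨a, rfl⟩ := exists_algebraMap_eq_of_pow_char_eq_self hu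
    obtain ⟨b, rfl⟩ := exists_algebraMap_eq_of_pow_char_eq_self hv
    exact ⟨a, b, ι.injective (by simpa using h₁), rfl, rfl⟩
  · rintro ⟨a, b, hab, rfl, rfl⟩
    have hab' : ι a * ι a + ι b * ι b = -1 := by
      rw [← map_mul, ← map_mul, ← map_add, ← sq, ← sq, hab, map_neg, map_one]
    have key (n : ℕ) (hn : ∀ c : ZMod p, ι c ^ n = ι c) :
        x ^ (n + 1) + (ι a * x) ^ (n + 1) + (ι b * x) ^ (n + 1) = 0 := by
      rw [hscaled, hn, hn]
      linear_combination x ^ (n + 1) * hab'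
    exact ⟨by simpa using key 1 fun c => pow_one _,
      key p fun c => by simpa using algebraMap_zmod_pow_char_pow c 1,
      key (p ^ 2) fun c => algebraMap_zmod_pow_char_pow c 2⟩

lemma card_powerSums_eq (hF : ¬IsSquare (-1 : F)) :
    #{t : F × F × F | t.1 ^ 2 + t.2.1 ^ 2 + t.2.2 ^ 2 = 0 ∧
      t.1 ^ (p + 1) + t.2.1 ^ (p + 1) + t.2.2 ^ (p + 1) = 0 ∧
      t.1 ^ (p ^ 2 + 1) + t.2.1 ^ (p ^ 2 + 1) + t.2.2 ^ (p ^ 2 + 1) = 0}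
      = 1 + (Fintype.card F - 1) * (p + 1) := by
  rw [card_filter, Fintype.sum_prod_type, ← add_sum_erase _ _ (mem_univ 0)]
  simp only [← card_filter]
  rw [card_powerSums_fiber_zero p hF,
    sum_congr rfl fun x hx => card_powerSums_fiber_of_ne_zero hF (ne_of_mem_erase hx),
    sum_const, card_erase_of_mem (mem_univ _), card_univ, smul_eq_mul]

end PowerSums

section CharacterSums

variable {R R' : Type*} [CommRing R] [Fintype R] [DecidableEq R] [CommRing R'] [IsDomain R']

lemma sum_mul_sum_mul_sum_eq_sum_prod {ι M : Type*} [Fintype ι] [CommSemiring M]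
    (φ₁ φ₂ φ₃ : ι → M) :
    (∑ x, φ₁ x) * (∑ x, φ₂ x) * (∑ x, φ₃ x)
      = ∑ t : ι × ι × ι, φ₁ t.1 * φ₂ t.2.1 * φ₃ t.2.2 := by
  rw [Fintype.sum_mul_sum]
  simp only [sum_mul]
  simp only [mul_sum, Fintype.sum_prod_type]

lemma sum_sum_sum_addChar_pow_three {ψ : AddChar R R'} (hψ : ψ.IsPrimitive) (f g h : R → R) :
    ∑ α : R, ∑ β : R, ∑ γ : R, (∑ x, ψ (α * f x + β * g x + γ * h x)) ^ 3
      = Fintype.card R ^ 3 * #{t : R × R × R | f t.1 + f t.2.1 + f t.2.2 = 0 ∧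
          g t.1 + g t.2.1 + g t.2.2 = 0 ∧ h t.1 + h t.2.1 + h t.2.2 = 0} := by
  have orth (b : R) : ∑ a : R, ψ (a * b) = if b = 0 then (Fintype.card R : R') else 0 := by
    rw [AddChar.sum_mulShift b hψ]; split_ifs <;> simp
  calc ∑ α : R, ∑ β : R, ∑ γ : R, (∑ x, ψ (α * f x + β * g x + γ * h x)) ^ 3
      = ∑ s : R × R × R, ∑ t : R × R × R, ψ (s.1 * (f t.1 + f t.2.1 + f t.2.2)) *
          ψ (s.2.1 * (g t.1 + g t.2.1 + g t.2.2)) * ψ (s.2.2 * (h t.1 + h t.2.1 + h t.2.2)) := by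
        simp only [Fintype.sum_prod_type, pow_three, ← mul_assoc,
          sum_mul_sum_mul_sum_eq_sum_prod, ← AddChar.map_add_eq_mul]
        congr! 7
        ring
    _ = ∑ t : R × R × R, (∑ α : R, ψ (α * (f t.1 + f t.2.1 + f t.2.2))) *
          (∑ β : R, ψ (β * (g t.1 + g t.2.1 + g t.2.2))) *
          (∑ γ : R, ψ (γ * (h t.1 + h t.2.1 + h t.2.2))) := by
        rw [sum_comm]
        simp only [sum_mul_sum_mul_sum_eq_sum_prod]
    _ = _ := by
        have hprod (a b c : R) (q : R') : (if a = 0 then q else 0) * (if b = 0 then q else 0) *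
            (if c = 0 then q else 0) = if a = 0 ∧ b = 0 ∧ c = 0 then q ^ 3 else 0 := by
          split_ifs <;> simp_all [pow_three, mul_assoc]
        simp only [orth, hprod, ← sum_filter, sum_const, nsmul_eq_mul, mul_comm]

lemma isPrimitive_zmodChar_comp_trace {p : ℕ} [Fact p.Prime] {F R : Type*} [Field F] [Fintype F]
    [CharP F p] [CommRing R] [IsDomain R] {ζ : R}
    (hζ : IsPrimitiveRoot ζ p) :
    ((AddChar.zmodChar p hζ.pow_eq_one).compAddMonoidHom
      (Algebra.trace (ZMod p) F).toAddMonoidHom).IsPrimitive := by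
  refine AddChar.IsPrimitive.of_ne_one (AddChar.ne_one_iff.mpr ?_)
  obtain ⟨a, ha⟩ := Algebra.trace_surjective (ZMod p) F 1
  refine ⟨a, ?_⟩
  simp [ha, AddChar.zmodChar_apply, ZMod.val_one, hζ.ne_one (Fact.out : p.Prime).one_lt]

end CharacterSums

lemma pow_mod_four_eq_three {p m : ℕ} (hp : p % 4 = 3) (hm : Odd m) : p ^ m % 4 = 3 := by
  obtain ⟨k, rfl⟩ := hm
  rw [Nat.pow_mod, hp, pow_succ, pow_mul, Nat.mul_mod, Nat.pow_mod]
  norm_num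

open Complex in
theorem stmt_14_general (p m : ℕ) [Fact p.Prime] (hp3 : p % 4 = 3)
    (hm : Odd m)
    (F : Type*) [Field F] [Fintype F] [CharP F p] (hcard : Fintype.card F = p ^ m)
    (ζ : ℂ) (hζ : ζ = Complex.exp (2 * Real.pi * I / p)) :
    (∑ α : F, ∑ β : F, ∑ γ : F,
        (∑ x : F, ζ ^ (Algebra.trace (ZMod p) F
              (α * x ^ 2 + β * x ^ (p + 1) + γ * x ^ (p ^ 2 + 1))).val) ^ 3)
      = ((p + 1 : ℂ) * ((p : ℂ) ^ m - 1) + 1) * (p : ℂ) ^ (3 * m) := by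
  classical
  have hζ' : IsPrimitiveRoot ζ p := hζ ▸ Complex.isPrimitiveRoot_exp p (NeZero.ne p)
  set ψ := (AddChar.zmodChar p hζ'.pow_eq_one).compAddMonoidHom
    (Algebra.trace (ZMod p) F).toAddMonoidHom
  have hψ (e : F) : ζ ^ (Algebra.trace (ZMod p) F e).val = ψ e := rfl
  have hF : ¬IsSquare (-1 : F) := by
    rw [FiniteField.isSquare_neg_one_iff, hcard, pow_mod_four_eq_three hp3 hm]
    exact fun h => h rfl
  simp only [hψ]
  rw [sum_sum_sum_addChar_pow_three (isPrimitive_zmodChar_comp_trace hζ'), card_powerSums_eq hF,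
    hcard, Nat.cast_add, Nat.cast_mul, Nat.cast_sub (Nat.one_le_pow _ _ (NeZero.pos p))]
  push_cast
  ring

open Complex in
theorem stmt_14 (p m : ℕ) [Fact p.Prime] (hp2 : Odd p) (hp3 : p % 4 = 3)
    (hm : Odd m) (hm3 : ¬ (3 ∣ m))
    (F : Type*) [Field F] [Fintype F] [CharP F p] (hcard : Fintype.card F = p ^ m)
    (ζ : ℂ) (hζ : ζ = Complex.exp (2 * Real.pi * I / p)) :
    (∑ α : F, ∑ β : F, ∑ γ : F,
        (∑ x : F, ζ ^ (Algebra.trace (ZMod p) F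
              (α * x ^ 2 + β * x ^ (p + 1) + γ * x ^ (p ^ 2 + 1))).val) ^ 3)
      = ((p + 1 : ℂ) * ((p : ℂ) ^ m - 1) + 1) * (p : ℂ) ^ (3 * m) :=
  stmt_14_general p m hp3 hm F hcard ζ hζ
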